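/- arXiv:2509.24627 — 2 statements merged into one kernel-verified Lean document; each statement's English description precedes it below -/
import Mathlib

section
/- Let ρ_Q : ℝ^n → ℝ^d and φ_Q : ℝ^d → ℝ^n be smooth maps with ρ_Q ∘ φ_Q = id. Fix p̌ ∈ ℝ^d and define C(q̌) = ∂/∂q̌ [(dρ_Q|_{φ_Q(q̌)})^T p̌] (the d-column Jacobian of the map q̌ ↦ (dρ_Q|_{φ_Q(q̌)})^T p̌, an n×d matrix). Then C(q̌)^T dφ_Q|_{q̌} is a symmetric d×d matrix. -/
open Matrix

/-- The Jacobian matrix of a map `f : ℝ^ι → ℝ^κ` at a point `x`. -/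
noncomputable def jac {ι κ : Type*} [Fintype ι] [DecidableEq ι] [Fintype κ]
    (f : (ι → ℝ) → (κ → ℝ)) (x : ι → ℝ) : Matrix κ ι ℝ :=
  Matrix.of fun i j => fderiv ℝ f x (Pi.single j 1) i

lemma pi_eq_sum_single {κ : Type*} [Fintype κ] [DecidableEq κ] (v : κ → ℝ) :
    v = ∑ k, v k • (Pi.single k 1 : κ → ℝ) := by
  ext m
  simp [Pi.single_apply]

lemma clm_apply_eq_sum {ι κ : Type*} [Fintype ι] [DecidableEq ι] [Fintype κ]
    (T : (ι → ℝ) →L[ℝ] (κ → ℝ)) (v : ι → ℝ) (m : κ) :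
    T v m = ∑ k, v k * T (Pi.single k 1) m := by
  conv_lhs => rw [pi_eq_sum_single v]
  rw [map_sum]
  simp [Finset.sum_apply]

/-- Chain rule for `jac`. -/
lemma jac_comp {ι κ μ : Type*} [Fintype ι] [DecidableEq ι] [Fintype κ] [DecidableEq κ]
    [Fintype μ] (f : (κ → ℝ) → (μ → ℝ)) (g : (ι → ℝ) → (κ → ℝ)) (x : ι → ℝ)
    (hf : DifferentiableAt ℝ f (g x)) (hg : DifferentiableAt ℝ g x) :
    jac (fun y => f (g y)) x = jac f (g x) * jac g x := by
  have H : HasFDerivAt (fun y => f (g y))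
      ((fderiv ℝ f (g x)).comp (fderiv ℝ g x)) x :=
    hf.hasFDerivAt.comp x hg.hasFDerivAt
  ext i j
  rw [jac, Matrix.mul_apply, of_apply, H.fderiv]
  simp only [ContinuousLinearMap.coe_comp', Function.comp_apply]
  rw [clm_apply_eq_sum (fderiv ℝ f (g x)) (fderiv ℝ g x (Pi.single j 1)) i]
  refine Finset.sum_congr rfl fun k _ => ?_
  simp [jac, mul_comm]

/-- With `ρQ ∘ φQ = id` and `C(q̌)` the Jacobian of `q̌ ↦ (dρQ|_{φQ q̌})ᵀ p̌`,
the matrix `C(q̌)ᵀ dφQ|_{q̌}` is symmetric. -/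
theorem stmt_4 (n d : ℕ)
    (ρQ : (Fin n → ℝ) → (Fin d → ℝ)) (φQ : (Fin d → ℝ) → (Fin n → ℝ))
    (hρ : ContDiff ℝ (⊤ : ℕ∞) ρQ) (hφ : ContDiff ℝ (⊤ : ℕ∞) φQ)
    (hproj : ρQ ∘ φQ = id)
    (pc : Fin d → ℝ) (qc : Fin d → ℝ) :
    ((jac (fun x => (jac ρQ (φQ x))ᵀ *ᵥ pc) qc)ᵀ * jac φQ qc).IsSymm := by
  classical
  -- the scalar function u y = ⟨pc, ρQ y⟩
  set L : (Fin d → ℝ) →L[ℝ] ℝ := ∑ a, pc a • ContinuousLinearMap.proj a with hLdef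
  have hLapp : ∀ v : Fin d → ℝ, L v = ∑ a, pc a * v a := by
    intro v; simp [hLdef, ContinuousLinearMap.sum_apply]
  set u : (Fin n → ℝ) → ℝ := fun y => L (ρQ y) with hudef
  have hu : ContDiff ℝ (⊤ : ℕ∞) u := L.contDiff.comp hρ
  set f' : (Fin n → ℝ) → ((Fin n → ℝ) →L[ℝ] ℝ) := fderiv ℝ u with hf'def
  have hfd : ∀ y, HasFDerivAt u (f' y) y :=
    fun y => (hu.differentiable (by simp) y).hasFDerivAt
  have hf'c : ContDiff ℝ (⊤ : ℕ∞) f' := hu.fderiv_right (by simp)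
  set G : (Fin n → ℝ) → (Fin n → ℝ) := fun y i => f' y (Pi.single i 1) with hGdef
  -- derivative of G
  set Φ' : (Fin n → ℝ) → ((Fin n → ℝ) →L[ℝ] (Fin n → ℝ)) :=
    fun y => ContinuousLinearMap.pi
      (fun i => (ContinuousLinearMap.apply ℝ ℝ (Pi.single i 1)).comp
        (fderiv ℝ f' y)) with hΦdef
  have hG : ∀ y, HasFDerivAt G (Φ' y) y := by
    intro y
    apply hasFDerivAt_pi''
    intro i
    rw [hΦdef, ContinuousLinearMap.proj_pi]
    exact (ContinuousLinearMap.apply ℝ ℝ (Pi.single i 1)).hasFDerivAt.comp y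
      (hf'c.differentiable (by simp) y).hasFDerivAt
  -- the inner function is G ∘ φQ
  have hfun : (fun x => (jac ρQ (φQ x))ᵀ *ᵥ pc) = fun x => G (φQ x) := by
    funext x
    ext i
    have hder : HasFDerivAt u (L.comp (fderiv ℝ ρQ (φQ x))) (φQ x) :=
      L.hasFDerivAt.comp (φQ x) (hρ.differentiable (by simp) (φQ x)).hasFDerivAt
    have : f' (φQ x) = L.comp (fderiv ℝ ρQ (φQ x)) := hder.fderiv
    simp only [hGdef, this, ContinuousLinearMap.coe_comp', Function.comp_apply, hLapp,
      Matrix.mulVec, dotProduct, Matrix.transpose_apply, jac, of_apply]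
    exact Finset.sum_congr rfl fun a _ => mul_comm _ _
  -- symmetry of jac G (the Hessian of u)
  have hSsym : ∀ y, (jac G y)ᵀ = jac G y := by
    intro y
    ext i j
    have hjac : jac G y = Matrix.of fun i j => Φ' y (Pi.single j 1) i := by
      rw [jac, (hG y).fderiv]
    have happ : ∀ i j, jac G y i j = fderiv ℝ f' y (Pi.single j 1) (Pi.single i 1) := by
      intro i j
      rw [hjac]
      simp [hΦdef]
    rw [Matrix.transpose_apply, happ, happ]
    exact second_derivative_symmetric hfd
      ((hf'c.differentiable (by simp) y).hasFDerivAt) _ _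
  -- chain rule
  have hGd : Differentiable ℝ G := fun y => (hG y).differentiableAt
  have hchain : jac (fun x => (jac ρQ (φQ x))ᵀ *ᵥ pc) qc
      = jac G (φQ qc) * jac φQ qc := by
    rw [hfun]
    exact jac_comp G φQ qc (hGd (φQ qc)) (hφ.differentiable (by simp) qc)
  rw [Matrix.IsSymm, hchain]
  simp [Matrix.transpose_mul, Matrix.mul_assoc, hSsym (φQ qc)]
end

section
/- Let ρ_Q ∘ φ_Q = id with differentials satisfying dρ_Q dφ_Q = I_d. Then the cotangent-lifted point reduction ρ(q, p) = (ρ_Q(q), (dφ_Q|_{ρ_Q(q)})^T p) has differential dρ satisfying dρ J_{2n} (dρ)^T = J_{2d} at all points of the form (φ_Q(q̌), (dρ_Q|_{φ_Q(q̌)})^T p̌), i.e., on the image of the cotangent-lifted embedding. -/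
open Matrix

/-- The canonical Poisson tensor `J_{2m} = [[0, I_m], [-I_m, 0]]`. -/
def Jmat (m : ℕ) : Matrix (Fin m ⊕ Fin m) (Fin m ⊕ Fin m) ℝ :=
  Matrix.fromBlocks 0 1 (-1) 0

/-- The cotangent-lifted point reduction `ρ(q, p) = (ρQ q, (dφQ|_{ρQ q})ᵀ p)`. -/
noncomputable def cotangentReduction {n d : ℕ}
    (ρQ : (Fin n → ℝ) → (Fin d → ℝ)) (φQ : (Fin d → ℝ) → (Fin n → ℝ))
    (x : Fin n ⊕ Fin n → ℝ) : Fin d ⊕ Fin d → ℝ :=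
  Sum.elim (ρQ (x ∘ Sum.inl)) ((jac φQ (ρQ (x ∘ Sum.inl)))ᵀ *ᵥ (x ∘ Sum.inr))

/-- The cotangent-lifted embedding `φ(q̌, p̌) = (φQ q̌, (dρQ|_{φQ q̌})ᵀ p̌)`. -/
noncomputable def cotangentLift {n d : ℕ}
    (ρQ : (Fin n → ℝ) → (Fin d → ℝ)) (φQ : (Fin d → ℝ) → (Fin n → ℝ))
    (x : Fin d ⊕ Fin d → ℝ) : Fin n ⊕ Fin n → ℝ :=
  Sum.elim (φQ (x ∘ Sum.inl)) ((jac ρQ (φQ (x ∘ Sum.inl)))ᵀ *ᵥ (x ∘ Sum.inr))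

section auxStmt17

noncomputable def inlC (n : ℕ) : ((Fin n ⊕ Fin n) → ℝ) →L[ℝ] (Fin n → ℝ) :=
  ContinuousLinearMap.pi fun i => ContinuousLinearMap.proj (Sum.inl i)

variable {n d : ℕ} {ρQ : (Fin n → ℝ) → (Fin d → ℝ)} {φQ : (Fin d → ℝ) → (Fin n → ℝ)}

lemma hasFDeriv_vec (hρ : ContDiff ℝ (⊤ : ℕ∞) ρQ) (x : (Fin n ⊕ Fin n) → ℝ) :
    HasFDerivAt (fun y : (Fin n ⊕ Fin n) → ℝ => ρQ (y ∘ Sum.inl))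
      ((fderiv ℝ ρQ (x ∘ Sum.inl)).comp (inlC n)) x :=
  ((hρ.differentiable (by simp) (x ∘ Sum.inl)).hasFDerivAt).comp x (inlC n).hasFDerivAt

lemma fderiv_inl_comp (hρ : ContDiff ℝ (⊤ : ℕ∞) ρQ) (x v : (Fin n ⊕ Fin n) → ℝ) (i : Fin d) :
    fderiv ℝ (fun y : (Fin n ⊕ Fin n) → ℝ => ρQ (y ∘ Sum.inl) i) x v
      = fderiv ℝ ρQ (x ∘ Sum.inl) (v ∘ Sum.inl) i := by
  have h : HasFDerivAt (fun y : (Fin n ⊕ Fin n) → ℝ => ρQ (y ∘ Sum.inl) i)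
      ((ContinuousLinearMap.proj (R := ℝ) i).comp
        ((fderiv ℝ ρQ (x ∘ Sum.inl)).comp (inlC n))) x :=
    hasFDerivAt_pi'.1 (hasFDeriv_vec hρ x) i
  rw [h.fderiv]; rfl

lemma diff_inl (hρ : ContDiff ℝ (⊤ : ℕ∞) ρQ) (x : (Fin n ⊕ Fin n) → ℝ) (i : Fin d) :
    DifferentiableAt ℝ (fun y : (Fin n ⊕ Fin n) → ℝ => ρQ (y ∘ Sum.inl) i) x := by
  have h : HasFDerivAt (fun y : (Fin n ⊕ Fin n) → ℝ => ρQ (y ∘ Sum.inl) i)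
      ((ContinuousLinearMap.proj (R := ℝ) i).comp
        ((fderiv ℝ ρQ (x ∘ Sum.inl)).comp (inlC n))) x :=
    hasFDerivAt_pi'.1 (hasFDeriv_vec hρ x) i
  exact h.differentiableAt

lemma hasFDeriv_inr (hρ : ContDiff ℝ (⊤ : ℕ∞) ρQ) (hφ : ContDiff ℝ (⊤ : ℕ∞) φQ)
    (x : (Fin n ⊕ Fin n) → ℝ) (i : Fin d) :
    HasFDerivAt (fun y : (Fin n ⊕ Fin n) → ℝ =>
        ∑ k, fderiv ℝ φQ (ρQ (y ∘ Sum.inl)) (Pi.single i 1) k * y (Sum.inr k))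
      (∑ k, ((fderiv ℝ φQ (ρQ (x ∘ Sum.inl)) (Pi.single i 1) k) •
              (ContinuousLinearMap.proj (R := ℝ) (Sum.inr k) : ((Fin n ⊕ Fin n) → ℝ) →L[ℝ] ℝ)
            + (x (Sum.inr k)) •
              ((ContinuousLinearMap.proj (R := ℝ) k).comp
                ((ContinuousLinearMap.apply ℝ (Fin n → ℝ) (Pi.single i 1)).comp
                  ((fderiv ℝ (fderiv ℝ φQ) (ρQ (x ∘ Sum.inl))).comp
                    ((fderiv ℝ ρQ (x ∘ Sum.inl)).comp (inlC n))))))) x := by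
  have hvec : HasFDerivAt (fun y : (Fin n ⊕ Fin n) → ℝ => fderiv ℝ φQ (ρQ (y ∘ Sum.inl)))
      ((fderiv ℝ (fderiv ℝ φQ) (ρQ (x ∘ Sum.inl))).comp
        ((fderiv ℝ ρQ (x ∘ Sum.inl)).comp (inlC n))) x :=
    (((hφ.fderiv_right (m := (⊤ : ℕ∞)) (by simp)).differentiable (by simp) _).hasFDerivAt).comp x (hasFDeriv_vec hρ x)
  have hg : ∀ k : Fin n, HasFDerivAt
      (fun y : (Fin n ⊕ Fin n) → ℝ => fderiv ℝ φQ (ρQ (y ∘ Sum.inl)) (Pi.single i 1) k)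
      ((ContinuousLinearMap.proj (R := ℝ) k).comp
        ((ContinuousLinearMap.apply ℝ (Fin n → ℝ) (Pi.single i 1)).comp
          ((fderiv ℝ (fderiv ℝ φQ) (ρQ (x ∘ Sum.inl))).comp
            ((fderiv ℝ ρQ (x ∘ Sum.inl)).comp (inlC n))))) x := by
    have hg' := (ContinuousLinearMap.apply ℝ (Fin n → ℝ) (Pi.single i 1)).hasFDerivAt.comp x hvec
    intro k
    exact hasFDerivAt_pi'.1 hg' k
  have hh : ∀ k : Fin n, HasFDerivAt (fun y : (Fin n ⊕ Fin n) → ℝ => y (Sum.inr k))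
      (ContinuousLinearMap.proj (R := ℝ) (Sum.inr k)) x := fun k =>
    hasFDerivAt_apply (𝕜 := ℝ) (Sum.inr k) x
  exact HasFDerivAt.fun_sum fun k _ => (hg k).mul (hh k)

lemma diff_inr (hρ : ContDiff ℝ (⊤ : ℕ∞) ρQ) (hφ : ContDiff ℝ (⊤ : ℕ∞) φQ)
    (x : (Fin n ⊕ Fin n) → ℝ) (i : Fin d) :
    DifferentiableAt ℝ (fun y : (Fin n ⊕ Fin n) → ℝ =>
        ∑ k, fderiv ℝ φQ (ρQ (y ∘ Sum.inl)) (Pi.single i 1) k * y (Sum.inr k)) x :=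
  (hasFDeriv_inr hρ hφ x i).differentiableAt

lemma fderiv_inr_comp (hρ : ContDiff ℝ (⊤ : ℕ∞) ρQ) (hφ : ContDiff ℝ (⊤ : ℕ∞) φQ)
    (x v : (Fin n ⊕ Fin n) → ℝ) (i : Fin d) :
    fderiv ℝ (fun y : (Fin n ⊕ Fin n) → ℝ =>
        ∑ k, fderiv ℝ φQ (ρQ (y ∘ Sum.inl)) (Pi.single i 1) k * y (Sum.inr k)) x v
      = ∑ k, (fderiv ℝ (fderiv ℝ φQ) (ρQ (x ∘ Sum.inl))
            (fderiv ℝ ρQ (x ∘ Sum.inl) (v ∘ Sum.inl)) (Pi.single i 1) k * x (Sum.inr k)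
          + fderiv ℝ φQ (ρQ (x ∘ Sum.inl)) (Pi.single i 1) k * v (Sum.inr k)) := by
  rw [(hasFDeriv_inr hρ hφ x i).fderiv]
  simp only [ContinuousLinearMap.sum_apply, ContinuousLinearMap.add_apply,
    ContinuousLinearMap.smul_apply, ContinuousLinearMap.comp_apply,
    ContinuousLinearMap.proj_apply, ContinuousLinearMap.apply_apply, smul_eq_mul]
  refine Finset.sum_congr rfl fun k _ => ?_
  have h : (inlC n) v = v ∘ Sum.inl := rfl
  rw [h]; ring

lemma clm_sum_single {m : ℕ} {V : Type*} [NormedAddCommGroup V] [NormedSpace ℝ V]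
    (T : (Fin m → ℝ) →L[ℝ] V) (c : Fin m → ℝ) :
    ∑ k, c k • T (Pi.single k 1) = T c := by
  have hc : ∑ k, c k • (Pi.single k (1:ℝ) : Fin m → ℝ) = c := by
    funext j
    simp [Finset.sum_apply, Pi.single_apply]
  conv_rhs => rw [← hc]
  rw [map_sum]
  simp [_root_.map_smul]

lemma sum_A_B {m d : ℕ} (A : (Fin m → ℝ) →L[ℝ] (Fin d → ℝ)) (c : Fin m → ℝ) (i : Fin d) :
    ∑ k, A (Pi.single k 1) i * c k = A c i := by
  have h := clm_sum_single ((ContinuousLinearMap.proj (R := ℝ) i).comp A) c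
  simp only [ContinuousLinearMap.comp_apply, ContinuousLinearMap.proj_apply,
    smul_eq_mul] at h
  rw [← h]
  exact Finset.sum_congr rfl fun k _ => mul_comm _ _

lemma sum_S_scalar {n d : ℕ}
    (S' : (Fin d → ℝ) →L[ℝ] ((Fin d → ℝ) →L[ℝ] (Fin n → ℝ)))
    (A : (Fin n → ℝ) →L[ℝ] (Fin d → ℝ)) (c : Fin n → ℝ) (u : Fin d → ℝ) (j : Fin n) :
    ∑ k, S' (A (Pi.single k 1)) u j * c k = S' (A c) u j := by
  have h := clm_sum_single (S'.comp A) c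
  have h2 := congrArg (fun L => L u j) h
  simp only [ContinuousLinearMap.sum_apply, ContinuousLinearMap.smul_apply,
    ContinuousLinearMap.comp_apply, Finset.sum_apply, Pi.smul_apply, smul_eq_mul] at h2
  rw [← h2]
  exact Finset.sum_congr rfl fun k _ => mul_comm _ _

lemma mulJ {m : ℕ} {α : Type*} [Fintype α] (M N : Matrix α (Fin m ⊕ Fin m) ℝ) (a b : α) :
    (M * Jmat m * Nᵀ) a b
      = (∑ k, M a (Sum.inl k) * N b (Sum.inr k)) - ∑ k, M a (Sum.inr k) * N b (Sum.inl k) := by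
  have h1 : ∀ j, (M * Jmat m) a j
      = Sum.elim (fun k => -M a (Sum.inr k)) (fun k => M a (Sum.inl k)) j := by
    intro j
    cases j with
    | inl k =>
      simp [Matrix.mul_apply, Jmat, Fintype.sum_sum_type, Matrix.one_apply,
        mul_ite, Finset.sum_ite_eq, Finset.sum_ite_eq']
    | inr k =>
      simp [Matrix.mul_apply, Jmat, Fintype.sum_sum_type, Matrix.one_apply,
        mul_ite, Finset.sum_ite_eq, Finset.sum_ite_eq']
  rw [Matrix.mul_apply, Fintype.sum_sum_type]
  simp only [Matrix.transpose_apply, h1, Sum.elim_inl, Sum.elim_inr]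
  have h2 : ∑ k, -M a (Sum.inr k) * N b (Sum.inl k)
      = -∑ k, M a (Sum.inr k) * N b (Sum.inl k) := by
    simp [neg_mul]
  rw [h2]; ring

end auxStmt17
/-- With `ρQ ∘ φQ = id`, the differential of the cotangent-lifted point
reduction `ρ` satisfies `dρ J_{2n} dρᵀ = J_{2d}` at all points on the image of
the cotangent-lifted embedding. -/
theorem stmt_17 (n d : ℕ)
    (ρQ : (Fin n → ℝ) → (Fin d → ℝ)) (φQ : (Fin d → ℝ) → (Fin n → ℝ))
    (hρ : ContDiff ℝ (⊤ : ℕ∞) ρQ) (hφ : ContDiff ℝ (⊤ : ℕ∞) φQ)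
    (hproj : ρQ ∘ φQ = id) :
    ∀ xc : Fin d ⊕ Fin d → ℝ,
      jac (cotangentReduction ρQ φQ) (cotangentLift ρQ φQ xc) * Jmat n *
          (jac (cotangentReduction ρQ φQ) (cotangentLift ρQ φQ xc))ᵀ
        = Jmat d := by
  intro xc
  set x := cotangentLift ρQ φQ xc with hxdef
  have hρd : Differentiable ℝ ρQ := hρ.differentiable (by simp)
  have hφd : Differentiable ℝ φQ := hφ.differentiable (by simp)
  have hx1 : x ∘ Sum.inl = φQ (xc ∘ Sum.inl) := rfl
  have hq : ρQ (x ∘ Sum.inl) = xc ∘ Sum.inl := by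
    rw [hx1]; exact congrFun hproj (xc ∘ Sum.inl)
  -- chain rule identity  A ∘ B = id
  have hAB : ∀ w : Fin d → ℝ,
      fderiv ℝ ρQ (φQ (xc ∘ Sum.inl)) (fderiv ℝ φQ (xc ∘ Sum.inl) w) = w := by
    intro w
    have h1 : fderiv ℝ (ρQ ∘ φQ) (xc ∘ Sum.inl)
        = (fderiv ℝ ρQ (φQ (xc ∘ Sum.inl))).comp (fderiv ℝ φQ (xc ∘ Sum.inl)) :=
      fderiv_comp _ (hρd _) (hφd _)
    have h2 : fderiv ℝ (ρQ ∘ φQ) (xc ∘ Sum.inl) = ContinuousLinearMap.id ℝ _ := by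
      rw [hproj]; exact fderiv_id
    calc fderiv ℝ ρQ (φQ (xc ∘ Sum.inl)) (fderiv ℝ φQ (xc ∘ Sum.inl) w)
        = ((fderiv ℝ ρQ (φQ (xc ∘ Sum.inl))).comp (fderiv ℝ φQ (xc ∘ Sum.inl))) w := rfl
      _ = (ContinuousLinearMap.id ℝ _) w := by rw [← h1, h2]
      _ = w := rfl
  -- symmetry of the second derivative of φQ
  have hsym : ∀ v w : Fin d → ℝ,
      fderiv ℝ (fderiv ℝ φQ) (xc ∘ Sum.inl) v w
        = fderiv ℝ (fderiv ℝ φQ) (xc ∘ Sum.inl) w v :=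
    hφ.contDiffAt.isSymmSndFDerivAt (by norm_num; change ((2:ℕ∞) : WithTop ℕ∞) ≤ _; exact WithTop.coe_le_coe.2 le_top)
  -- entries of the Jacobian of the reduction at x
  have hjac : ∀ (a : Fin d ⊕ Fin d) (j : Fin n ⊕ Fin n),
      jac (cotangentReduction ρQ φQ) x a j
        = fderiv ℝ (Sum.elim
            (fun i (y : (Fin n ⊕ Fin n) → ℝ) => ρQ (y ∘ Sum.inl) i)
            (fun i (y : (Fin n ⊕ Fin n) → ℝ) =>
              ∑ k, fderiv ℝ φQ (ρQ (y ∘ Sum.inl)) (Pi.single i 1) k * y (Sum.inr k)) a) x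
            (Pi.single j 1) := by
    intro a j
    have hFeq : cotangentReduction ρQ φQ = fun (y : (Fin n ⊕ Fin n) → ℝ) a => Sum.elim
        (fun i (y : (Fin n ⊕ Fin n) → ℝ) => ρQ (y ∘ Sum.inl) i)
        (fun i (y : (Fin n ⊕ Fin n) → ℝ) =>
          ∑ k, fderiv ℝ φQ (ρQ (y ∘ Sum.inl)) (Pi.single i 1) k * y (Sum.inr k)) a y := by
      funext y a
      cases a with
      | inl i => rfl
      | inr i =>
        simp [cotangentReduction, jac, Matrix.mulVec, dotProduct]
    have hdiffs : ∀ a : Fin d ⊕ Fin d, DifferentiableAt ℝ (Sum.elim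
        (fun i (y : (Fin n ⊕ Fin n) → ℝ) => ρQ (y ∘ Sum.inl) i)
        (fun i (y : (Fin n ⊕ Fin n) → ℝ) =>
          ∑ k, fderiv ℝ φQ (ρQ (y ∘ Sum.inl)) (Pi.single i 1) k * y (Sum.inr k)) a) x := by
      intro a
      cases a with
      | inl i => exact diff_inl hρ x i
      | inr i => exact diff_inr hρ hφ x i
    show fderiv ℝ (cotangentReduction ρQ φQ) x (Pi.single j 1) a = _
    rw [hFeq, fderiv_pi hdiffs]
    rfl
  -- the four blocks
  have hvl : ∀ j : Fin n,
      (Pi.single (Sum.inl j : Fin n ⊕ Fin n) (1:ℝ)) ∘ Sum.inl = Pi.single j 1 := by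
    intro j; funext m; simp [Pi.single_apply, Function.comp]
  have hvr : ∀ j : Fin n,
      (Pi.single (Sum.inr j : Fin n ⊕ Fin n) (1:ℝ)) ∘ Sum.inl = 0 := by
    intro j; funext m; simp [Pi.single_apply, Function.comp]
  have Dll : ∀ (i : Fin d) (j : Fin n),
      jac (cotangentReduction ρQ φQ) x (Sum.inl i) (Sum.inl j)
        = fderiv ℝ ρQ (φQ (xc ∘ Sum.inl)) (Pi.single j 1) i := by
    intro i j
    rw [hjac]
    simp only [Sum.elim_inl]
    rw [fderiv_inl_comp hρ, hvl, hx1]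
  have Dlr : ∀ (i : Fin d) (j : Fin n),
      jac (cotangentReduction ρQ φQ) x (Sum.inl i) (Sum.inr j) = 0 := by
    intro i j
    rw [hjac]
    simp only [Sum.elim_inl]
    rw [fderiv_inl_comp hρ, hvr]
    simp
  have Drl : ∀ (i : Fin d) (j : Fin n),
      jac (cotangentReduction ρQ φQ) x (Sum.inr i) (Sum.inl j)
        = ∑ m, fderiv ℝ (fderiv ℝ φQ) (xc ∘ Sum.inl)
            (fderiv ℝ ρQ (φQ (xc ∘ Sum.inl)) (Pi.single j 1)) (Pi.single i 1) m
              * x (Sum.inr m) := by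
    intro i j
    rw [hjac]
    simp only [Sum.elim_inr]
    rw [fderiv_inr_comp hρ hφ, hvl, hq, hx1]
    simp [Pi.single_apply]
  have Drr : ∀ (i : Fin d) (j : Fin n),
      jac (cotangentReduction ρQ φQ) x (Sum.inr i) (Sum.inr j)
        = fderiv ℝ φQ (xc ∘ Sum.inl) (Pi.single i 1) j := by
    intro i j
    rw [hjac]
    simp only [Sum.elim_inr]
    rw [fderiv_inr_comp hρ hφ, hvr, hq]
    simp [Pi.single_apply]
  ext a b
  rw [mulJ]
  cases a with
  | inl i =>
    cases b with
    | inl i' => simp [Dll, Dlr, Jmat]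
    | inr i' =>
      simp only [Dll, Dlr, Drl, Drr, zero_mul, mul_zero, Finset.sum_const_zero, sub_zero]
      rw [sum_A_B, hAB]
      simp [Jmat, Matrix.one_apply, Pi.single_apply]
  | inr i =>
    cases b with
    | inl i' =>
      simp only [Dll, Dlr, Drl, Drr, zero_mul, mul_zero, Finset.sum_const_zero, zero_sub]
      have h2 : ∑ k, fderiv ℝ φQ (xc ∘ Sum.inl) (Pi.single i 1) k
            * fderiv ℝ ρQ (φQ (xc ∘ Sum.inl)) (Pi.single k 1) i'
          = (Pi.single i 1 : Fin d → ℝ) i' := by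
        rw [show (∑ k, fderiv ℝ φQ (xc ∘ Sum.inl) (Pi.single i 1) k
              * fderiv ℝ ρQ (φQ (xc ∘ Sum.inl)) (Pi.single k 1) i')
            = ∑ k, fderiv ℝ ρQ (φQ (xc ∘ Sum.inl)) (Pi.single k 1) i'
              * fderiv ℝ φQ (xc ∘ Sum.inl) (Pi.single i 1) k
          from Finset.sum_congr rfl fun k _ => mul_comm _ _]
        rw [sum_A_B, hAB]
      rw [h2]
      simp [Jmat, Matrix.one_apply, Pi.single_apply, eq_comm]
    | inr i' =>
      simp only [Drl, Drr]
      have key : ∀ u u' : Fin d,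
          ∑ k, (∑ m, fderiv ℝ (fderiv ℝ φQ) (xc ∘ Sum.inl)
                (fderiv ℝ ρQ (φQ (xc ∘ Sum.inl)) (Pi.single k 1)) (Pi.single u 1) m
                  * x (Sum.inr m)) * fderiv ℝ φQ (xc ∘ Sum.inl) (Pi.single u' 1) k
            = ∑ m, fderiv ℝ (fderiv ℝ φQ) (xc ∘ Sum.inl)
                (Pi.single u' 1) (Pi.single u 1) m * x (Sum.inr m) := by
        intro u u'
        calc ∑ k, (∑ m, fderiv ℝ (fderiv ℝ φQ) (xc ∘ Sum.inl)
                (fderiv ℝ ρQ (φQ (xc ∘ Sum.inl)) (Pi.single k 1)) (Pi.single u 1) m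
                  * x (Sum.inr m)) * fderiv ℝ φQ (xc ∘ Sum.inl) (Pi.single u' 1) k
            = ∑ m, (∑ k, fderiv ℝ (fderiv ℝ φQ) (xc ∘ Sum.inl)
                (fderiv ℝ ρQ (φQ (xc ∘ Sum.inl)) (Pi.single k 1)) (Pi.single u 1) m
                  * fderiv ℝ φQ (xc ∘ Sum.inl) (Pi.single u' 1) k) * x (Sum.inr m) := by
              simp_rw [Finset.sum_mul]
              rw [Finset.sum_comm]
              refine Finset.sum_congr rfl fun m _ => ?_
              exact Finset.sum_congr rfl fun k _ => by ring
          _ = ∑ m, fderiv ℝ (fderiv ℝ φQ) (xc ∘ Sum.inl)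
                (fderiv ℝ ρQ (φQ (xc ∘ Sum.inl))
                  (fderiv ℝ φQ (xc ∘ Sum.inl) (Pi.single u' 1))) (Pi.single u 1) m
                  * x (Sum.inr m) := by
              refine Finset.sum_congr rfl fun m _ => ?_
              rw [sum_S_scalar]
          _ = _ := by rw [hAB]
      rw [key i i']
      have h4 : ∑ k, fderiv ℝ φQ (xc ∘ Sum.inl) (Pi.single i 1) k
            * (∑ m, fderiv ℝ (fderiv ℝ φQ) (xc ∘ Sum.inl)
                (fderiv ℝ ρQ (φQ (xc ∘ Sum.inl)) (Pi.single k 1)) (Pi.single i' 1) m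
                  * x (Sum.inr m))
          = ∑ m, fderiv ℝ (fderiv ℝ φQ) (xc ∘ Sum.inl)
                (Pi.single i 1) (Pi.single i' 1) m * x (Sum.inr m) := by
        rw [← key i' i]
        exact Finset.sum_congr rfl fun k _ => mul_comm _ _
      rw [h4, hsym (Pi.single i' 1) (Pi.single i 1)]
      simp [Jmat]
end
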